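/- arXiv:1009.0075 — 6 statements merged into one kernel-verified Lean document; each statement's English description precedes it below -/
import Mathlib

section
/- Suppose a group G acts on a finite set X with orbits X_1,…,X_k such that every nontrivial normal subgroup of G acts transitively on all but at most one of the orbits X_i. Then there is at most one index i such that G acts faithfully but not quasiprimitively on X_i. Equivalently, if G acts faithfully on both X_i and X_j with i ≠ j and is not quasiprimitive on X_i, then G is quasiprimitive on X_j. -/
/-- `N` acts transitively on the set `s`. -/
def TransOnSet {G X : Type*} [Group G] [MulAction G X] (N : Subgroup G) (s : Set X) : Prop :=
  ∀ a ∈ s, ∀ b ∈ s, ∃ n ∈ N, n • a = b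

/-- `G` acts faithfully on the set `s`. -/
def FaithOnSet (G : Type*) {X : Type*} [Group G] [MulAction G X] (s : Set X) : Prop :=
  ∀ g : G, (∀ x ∈ s, g • x = x) → g = 1

/-- `G` acts quasiprimitively on the set `s`: every nontrivial normal subgroup
is transitive on `s`. -/
def QPOnSet (G : Type*) {X : Type*} [Group G] [MulAction G X] (s : Set X) : Prop :=
  ∀ N : Subgroup G, N.Normal → N ≠ ⊥ → TransOnSet N s

lemma trans_mono {G X : Type*} [Group G] [MulAction G X] {N M : Subgroup G} {s : Set X}
    (hNM : N ≤ M) (h : TransOnSet N s) : TransOnSet M s := by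
  intro a ha b hb
  obtain ⟨n, hn, hnab⟩ := h a ha b hb
  exact ⟨n, hNM hn, hnab⟩


/-- If G acts on a finite set X so that every nontrivial normal
subgroup of G is transitive on all but at most one G-orbit, then G is
quasiprimitive on all but at most one faithful orbit: if G is faithful on two
distinct orbits and not quasiprimitive on the first, it is quasiprimitive on
the second. -/
theorem qp_all_but_one_faithful_orbit {G X : Type*} [Group G] [MulAction G X]
    [Finite X]
    (h : ∀ N : Subgroup G, N.Normal → N ≠ ⊥ →
      ∀ x y : X, MulAction.orbit G x ≠ MulAction.orbit G y →
        TransOnSet N (MulAction.orbit G x) ∨ TransOnSet N (MulAction.orbit G y)) :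
    ∀ x y : X, MulAction.orbit G x ≠ MulAction.orbit G y →
      FaithOnSet G (MulAction.orbit G x) → FaithOnSet G (MulAction.orbit G y) →
      ¬ QPOnSet G (MulAction.orbit G x) → QPOnSet G (MulAction.orbit G y) := by
  intro x y hxy hfx hfy hnqp
  -- G is finite since it acts faithfully on a finite orbit
  have hGfin : Finite G := by
    have : Function.Injective (fun g : G => fun a : X => g • a) := by
      intro g g' hgg'
      have : ∀ a ∈ MulAction.orbit G x, (g'⁻¹ * g) • a = a := by
        intro a _
        have := congrFun hgg' a
        simp only at this
        rw [mul_smul, this, inv_smul_smul]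
      have := hfx _ this
      rwa [inv_mul_eq_one, eq_comm] at this
    exact Finite.of_injective _ this
  unfold QPOnSet at hnqp
  push_neg at hnqp
  obtain ⟨N, hNnorm, hNne, hNnt⟩ := hnqp
  have hNy : TransOnSet N (MulAction.orbit G y) :=
    (h N hNnorm hNne x y hxy).resolve_left hNnt
  intro M hMnorm hMne
  by_contra hMnt
  have hMx : TransOnSet M (MulAction.orbit G x) :=
    (h M hMnorm hMne x y hxy).resolve_right hMnt
  -- M ⊓ N = ⊥
  have hdis : Disjoint M N := by
    rw [Subgroup.disjoint_def]
    intro g hgM hgN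
    by_contra hne1
    have hKne : M ⊓ N ≠ ⊥ := by
      intro hbot
      apply hne1
      have : g ∈ M ⊓ N := ⟨hgM, hgN⟩
      rw [hbot, Subgroup.mem_bot] at this
      exact this
    have hKnorm : (M ⊓ N).Normal := @Subgroup.normal_inf_normal _ _ M N hMnorm hNnorm
    rcases h _ hKnorm hKne x y hxy with ht | ht
    · exact hNnt (trans_mono inf_le_right ht)
    · exact hMnt (trans_mono inf_le_left ht)
  have hcomm : ∀ m ∈ M, ∀ n ∈ N, Commute m n := fun m hm n hn =>
    Subgroup.commute_of_normal_of_disjoint M N hMnorm hNnorm hdis m n hm hn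
  -- M is semiregular on orbit of y: if m ∈ M fixes a point of orbit y, m = 1
  have hsemiM : ∀ m ∈ M, ∀ a ∈ MulAction.orbit G y, m • a = a → m = 1 := by
    intro m hm a ha hma
    apply hfy
    intro b hb
    obtain ⟨n, hn, hnab⟩ := hNy a ha b hb
    rw [← hnab, ← mul_smul, (hcomm m hm n hn).eq, mul_smul, hma]
  -- N is semiregular on orbit of x
  have hsemiN : ∀ n ∈ N, ∀ a ∈ MulAction.orbit G x, n • a = a → n = 1 := by
    intro n hn a ha hna
    apply hfx
    intro b hb
    obtain ⟨m, hm, hmab⟩ := hMx a ha b hb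
    rw [← hmab, ← mul_smul, ← (hcomm m hm n hn).eq, mul_smul, hna]
  classical
  have : Fintype X := Fintype.ofFinite X
  have : Fintype G := Fintype.ofFinite G
  have hxm : x ∈ MulAction.orbit G x := MulAction.mem_orbit_self x
  have hym : y ∈ MulAction.orbit G y := MulAction.mem_orbit_self y
  -- card M < card (orbit y)
  have h1 : Fintype.card M < Fintype.card (MulAction.orbit G y) := by
    have hinj : Function.Injective
        (fun m : M => (⟨(m : G) • y, MulAction.mem_orbit_iff.mpr ⟨m, rfl⟩⟩ :
          MulAction.orbit G y)) := by
      intro m m' hmm'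
      have : (m : G) • y = (m' : G) • y := congrArg Subtype.val hmm'
      have h2 : ((m' : G)⁻¹ * m) • y = y := by rw [mul_smul, this, inv_smul_smul]
      have := hsemiM _ (mul_mem (inv_mem m'.2) m.2) y hym h2
      ext
      rwa [inv_mul_eq_one, eq_comm] at this
    apply Fintype.card_lt_of_injective_not_surjective _ hinj
    intro hsurj
    apply hMnt
    intro a ha b hb
    obtain ⟨ma, hma⟩ := hsurj ⟨a, ha⟩
    obtain ⟨mb, hmb⟩ := hsurj ⟨b, hb⟩
    refine ⟨mb * (ma : G)⁻¹, mul_mem mb.2 (inv_mem ma.2), ?_⟩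
    have hma' : (ma : G) • y = a := congrArg Subtype.val hma
    have hmb' : (mb : G) • y = b := congrArg Subtype.val hmb
    rw [← hma', mul_smul, inv_smul_smul, hmb']
  -- card (orbit y) ≤ card N
  have h2 : Fintype.card (MulAction.orbit G y) ≤ Fintype.card N := by
    apply Fintype.card_le_of_surjective
      (fun n : N => (⟨(n : G) • y, MulAction.mem_orbit_iff.mpr ⟨n, rfl⟩⟩ : MulAction.orbit G y))
    intro ⟨b, hb⟩
    obtain ⟨n, hn, hnb⟩ := hNy y hym b hb
    exact ⟨⟨n, hn⟩, Subtype.ext hnb⟩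
  -- card N < card (orbit x)
  have h3 : Fintype.card N < Fintype.card (MulAction.orbit G x) := by
    have hinj : Function.Injective
        (fun n : N => (⟨(n : G) • x, MulAction.mem_orbit_iff.mpr ⟨n, rfl⟩⟩ :
          MulAction.orbit G x)) := by
      intro n n' hnn'
      have : (n : G) • x = (n' : G) • x := congrArg Subtype.val hnn'
      have h2' : ((n' : G)⁻¹ * n) • x = x := by rw [mul_smul, this, inv_smul_smul]
      have := hsemiN _ (mul_mem (inv_mem n'.2) n.2) x hxm h2'
      ext
      rwa [inv_mul_eq_one, eq_comm] at this
    apply Fintype.card_lt_of_injective_not_surjective _ hinj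
    intro hsurj
    apply hNnt
    intro a ha b hb
    obtain ⟨na, hna⟩ := hsurj ⟨a, ha⟩
    obtain ⟨nb, hnb⟩ := hsurj ⟨b, hb⟩
    refine ⟨nb * (na : G)⁻¹, mul_mem nb.2 (inv_mem na.2), ?_⟩
    have hna' : (na : G) • x = a := congrArg Subtype.val hna
    have hnb' : (nb : G) • x = b := congrArg Subtype.val hnb
    rw [← hna', mul_smul, inv_smul_smul, hnb']
  -- card (orbit x) ≤ card M
  have h4 : Fintype.card (MulAction.orbit G x) ≤ Fintype.card M := by
    apply Fintype.card_le_of_surjective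
      (fun m : M => (⟨(m : G) • x, MulAction.mem_orbit_iff.mpr ⟨m, rfl⟩⟩ : MulAction.orbit G x))
    intro ⟨b, hb⟩
    obtain ⟨m, hm, hmb⟩ := hMx x hxm b hb
    exact ⟨⟨m, hm⟩, Subtype.ext hmb⟩
  omega
end

section
/- Suppose a group G acts on a finite set X with orbits X_1,…,X_k, such that every nontrivial normal subgroup of G is transitive on all but at most one orbit. If there exist distinct indices i, j and nontrivial normal subgroups N_i, N_j of G with N_i intransitive and nontrivial on X_i, N_j intransitive and nontrivial on X_j, and G faithful on both X_i and X_j, then a contradiction follows; in particular such i, j cannot both exist. -/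
/-- `N` acts trivially on the set `s`. -/
def TrivOnSet {G X : Type*} [Group G] [MulAction G X] (N : Subgroup G) (s : Set X) : Prop :=
  ∀ n ∈ N, ∀ x ∈ s, n • x = x

lemma transOnSet_mono {G X : Type*} [Group G] [MulAction G X] {N M : Subgroup G} {s : Set X}
    (hNM : N ≤ M) (hN : TransOnSet N s) : TransOnSet M s := by
  intro a ha b hb
  obtain ⟨n, hn, hab⟩ := hN a ha b hb
  exact ⟨n, hNM hn, hab⟩

lemma smul_mem_orbit_of_mem {G X : Type*} [Group G] [MulAction G X] {a x : X}
    (ha : a ∈ MulAction.orbit G x) (g : G) : g • a ∈ MulAction.orbit G x := by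
  obtain ⟨k, rfl⟩ := ha
  exact ⟨g * k, mul_smul g k x⟩

/-- Key counting lemma: if `N` commutes with a subgroup `M` transitive on the orbit of `x`,
`G` is faithful on the orbit of `x`, `N` is transitive on the orbit of `y` but intransitive
on the orbit of `x`, then the orbit of `y` is at most half the orbit of `x`. -/
lemma key_count {G X : Type*} [Group G] [MulAction G X] [Finite X]
    (N M : Subgroup G) (x y : X)
    (hNtransY : TransOnSet N (MulAction.orbit G y))
    (hMtransX : TransOnSet M (MulAction.orbit G x))
    (comm : ∀ n ∈ N, ∀ m ∈ M, n * m = m * n)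
    (hfx : FaithOnSet G (MulAction.orbit G x))
    (hNint : ¬ TransOnSet N (MulAction.orbit G x)) :
    2 * (MulAction.orbit G y).ncard ≤ (MulAction.orbit G x).ncard := by
  -- N acts freely on the orbit of x
  have free : ∀ n ∈ N, ∀ a ∈ MulAction.orbit G x, n • a = a → n = 1 := by
    intro n hn a ha hfix
    apply hfx
    intro b hb
    obtain ⟨m, hm, hma⟩ := hMtransX a ha b hb
    calc n • b = n • m • a := by rw [hma]
    _ = (n * m) • a := (mul_smul n m a).symm
    _ = (m * n) • a := by rw [comm n hn m hm]
    _ = m • n • a := mul_smul m n a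
    _ = b := by rw [hfix, hma]
  -- injectivity of translation maps on points of the orbit of x
  have inj : ∀ a ∈ MulAction.orbit G x, Function.Injective (fun n : ↥N => (n : G) • a) := by
    intro a ha n m hnm
    simp only at hnm
    have hmem : (m : G)⁻¹ * (n : G) ∈ N := mul_mem (inv_mem m.2) n.2
    have hfix : ((m : G)⁻¹ * (n : G)) • a = a := by
      rw [mul_smul, hnm, inv_smul_smul]
    have h1 := free _ hmem a ha hfix
    have h2 : (n : G) = (m : G) := (inv_mul_eq_one.mp h1).symm
    exact Subtype.ext h2
  have hxmem : x ∈ MulAction.orbit G x := MulAction.mem_orbit_self x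
  have hNfin : Finite ↥N := Finite.of_injective _ (inj x hxmem)
  -- |orbit y| ≤ |N| since N is transitive on orbit y
  have hsurj : Function.Surjective (fun n : ↥N => (⟨(n : G) • y, MulAction.mem_orbit y _⟩ :
      ↥(MulAction.orbit G y))) := by
    rintro ⟨b, hb⟩
    obtain ⟨n, hn, hny⟩ := hNtransY y (MulAction.mem_orbit_self y) b hb
    exact ⟨⟨n, hn⟩, Subtype.ext hny⟩
  have hcard1 : Nat.card ↥(MulAction.orbit G y) ≤ Nat.card ↥N :=
    Nat.card_le_card_of_surjective _ hsurj
  -- two disjoint N-orbits inside orbit x, each of size |N|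
  rw [TransOnSet] at hNint
  push_neg at hNint
  obtain ⟨a, ha, b, hb, hab⟩ := hNint
  set Sa : Set X := Set.range (fun n : ↥N => (n : G) • a) with hSa
  set Sb : Set X := Set.range (fun n : ↥N => (n : G) • b) with hSb
  have hcardSa : Sa.ncard = Nat.card ↥N := by
    rw [hSa, ← Nat.card_coe_set_eq, Nat.card_range_of_injective (inj a ha)]
  have hcardSb : Sb.ncard = Nat.card ↥N := by
    rw [hSb, ← Nat.card_coe_set_eq, Nat.card_range_of_injective (inj b hb)]
  have hdisj : Disjoint Sa Sb := by
    rw [Set.disjoint_left]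
    rintro c ⟨n, rfl⟩ ⟨m, hm⟩
    simp only at hm
    refine hab ((m : G)⁻¹ * (n : G)) (mul_mem (inv_mem m.2) n.2) ?_
    rw [mul_smul, ← hm, inv_smul_smul]
  have hsub : Sa ∪ Sb ⊆ MulAction.orbit G x := by
    rintro c (⟨n, rfl⟩ | ⟨n, rfl⟩)
    · exact smul_mem_orbit_of_mem ha _
    · exact smul_mem_orbit_of_mem hb _
  calc 2 * (MulAction.orbit G y).ncard
      = (MulAction.orbit G y).ncard + (MulAction.orbit G y).ncard := (two_mul _)
    _ ≤ Nat.card ↥N + Nat.card ↥N := by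
        rw [Nat.card_coe_set_eq] at hcard1
        omega
    _ = Sa.ncard + Sb.ncard := by rw [hcardSa, hcardSb]
    _ = (Sa ∪ Sb).ncard := (Set.ncard_union_eq hdisj (Set.toFinite _) (Set.toFinite _)).symm
    _ ≤ (MulAction.orbit G x).ncard := Set.ncard_le_ncard hsub (Set.toFinite _)

/-- Suppose G acts on a finite set X so that every nontrivial
normal subgroup is transitive on all but at most one orbit.  If there were
distinct orbits (of x and y) and nontrivial normal subgroups N_x, N_y with
N_x intransitive and nontrivial on the orbit of x, N_y intransitive and
nontrivial on the orbit of y, and G faithful on both orbits, then a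
contradiction follows. -/
theorem no_two_bad_faithful_orbits {G X : Type*} [Group G] [MulAction G X]
    [Finite X]
    (h : ∀ N : Subgroup G, N.Normal → N ≠ ⊥ →
      ∀ x y : X, MulAction.orbit G x ≠ MulAction.orbit G y →
        TransOnSet N (MulAction.orbit G x) ∨ TransOnSet N (MulAction.orbit G y))
    (x y : X) (hxy : MulAction.orbit G x ≠ MulAction.orbit G y)
    (Nx Ny : Subgroup G) (hNx : Nx.Normal) (hNy : Ny.Normal)
    (hNxbot : Nx ≠ ⊥) (hNybot : Ny ≠ ⊥)
    (hNxint : ¬ TransOnSet Nx (MulAction.orbit G x))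
    (hNxnontriv : ¬ TrivOnSet Nx (MulAction.orbit G x))
    (hNyint : ¬ TransOnSet Ny (MulAction.orbit G y))
    (hNynontriv : ¬ TrivOnSet Ny (MulAction.orbit G y))
    (hfx : FaithOnSet G (MulAction.orbit G x))
    (hfy : FaithOnSet G (MulAction.orbit G y)) :
    False := by
  -- Nx is transitive on orbit y, Ny on orbit x
  have hNxY : TransOnSet Nx (MulAction.orbit G y) :=
    (h Nx hNx hNxbot x y hxy).resolve_left hNxint
  have hNyX : TransOnSet Ny (MulAction.orbit G x) :=
    (h Ny hNy hNybot x y hxy).resolve_right hNyint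
  -- Nx ⊓ Ny = ⊥
  have hinf : Nx ⊓ Ny = ⊥ := by
    by_contra hne
    rcases h (Nx ⊓ Ny) (@Subgroup.normal_inf_normal _ _ Nx Ny hNx hNy) hne x y hxy with ht | ht
    · exact hNxint (transOnSet_mono inf_le_left ht)
    · exact hNyint (transOnSet_mono inf_le_right ht)
  have comm : ∀ n ∈ Nx, ∀ m ∈ Ny, n * m = m * n := fun n hn m hm =>
    Subgroup.commute_of_normal_of_disjoint Nx Ny hNx hNy
      (disjoint_iff.mpr hinf) n m hn hm
  have comm' : ∀ n ∈ Ny, ∀ m ∈ Nx, n * m = m * n := fun n hn m hm =>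
    (comm m hm n hn).symm
  have h1 := key_count Nx Ny x y hNxY hNyX comm hfx hNxint
  have h2 := key_count Ny Nx y x hNyX hNxY comm' hfy hNyint
  have hpos : 0 < (MulAction.orbit G x).ncard :=
    (Set.ncard_pos (Set.toFinite _)).mpr ⟨x, MulAction.mem_orbit_self x⟩
  omega
end

section
/- Let Γ be a pregeometry with all rank 2 truncations connected and G ≤ Aut(Γ) transitive on each X_i. If Γ is fully G-primitive (G acts primitively on each X_i) and Γ is indecomposable (not a direct sum of two smaller pregeometries), then G acts faithfully on each X_i. -/
open Pointwise

/-- A pregeometry: a set of elements with a symmetric reflexive incidence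
relation and a type function, such that distinct incident elements have
distinct types. -/
structure PreGeom (X I : Type*) where
  incid : X → X → Prop
  t : X → I
  symm : ∀ x y, incid x y → incid y x
  refl : ∀ x, incid x x
  diff : ∀ x y, incid x y → x ≠ y → t x ≠ t y

/-- The action of `G` on `X` is by automorphisms of `Γ` (type-preserving,
incidence-preserving) and is faithful, i.e. `G ≤ Aut Γ`. -/
def PreGeom.ActsOn {X I : Type*} (Γ : PreGeom X I) (G : Type*) [Group G] [MulAction G X] : Prop :=
  (∀ (g : G) (x : X), Γ.t (g • x) = Γ.t x) ∧
  (∀ (g : G) (x y : X), Γ.incid (g • x) (g • y) ↔ Γ.incid x y) ∧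
  (∀ g : G, (∀ x : X, g • x = x) → g = 1)

/-- `G` is transitive on the set of elements of each type. -/
def PreGeom.TransTypes {X I : Type*} (Γ : PreGeom X I) (G : Type*) [Group G] [MulAction G X] : Prop :=
  ∀ x y : X, Γ.t x = Γ.t y → ∃ g : G, g • x = y

/-- All rank 2 truncations of `Γ` are connected: for distinct types `i,j`,
any two elements of type `i` or `j` are joined by a path in the incidence
graph restricted to the elements of types `i` and `j`. -/
def PreGeom.Rank2Conn {X I : Type*} (Γ : PreGeom X I) : Prop :=
  ∀ i j : I, i ≠ j → ∀ x y : X,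
    Γ.t x ∈ ({i, j} : Set I) → Γ.t y ∈ ({i, j} : Set I) →
    Relation.ReflTransGen
      (fun a b => Γ.incid a b ∧ Γ.t a ∈ ({i, j} : Set I) ∧ Γ.t b ∈ ({i, j} : Set I)) x y

/-- The subgroup `N` is transitive on the elements of type `i`. -/
def SubTransOn {X I : Type*} (Γ : PreGeom X I) {G : Type*} [Group G] [MulAction G X]
    (N : Subgroup G) (i : I) : Prop :=
  ∀ x y : X, Γ.t x = i → Γ.t y = i → ∃ n ∈ N, n • x = y

/-- `G` acts faithfully on the set of elements of type `i`. -/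
def PreGeom.FaithfulOn {X I : Type*} (Γ : PreGeom X I) (G : Type*) [Group G] [MulAction G X]
    (i : I) : Prop :=
  ∀ g : G, (∀ x : X, Γ.t x = i → g • x = x) → g = 1

/-- The kernel `G_{(X_i)}` of the action of `G` on the set of elements of type `i`. -/
def kerOn {X I : Type*} (Γ : PreGeom X I) (G : Type*) [Group G] [MulAction G X] (i : I) :
    Subgroup G :=
  ⨅ x ∈ {x : X | Γ.t x = i}, MulAction.stabilizer G x

/-- `Γ` is `G`-normal-basic: it is not normal-degenerate (at least two types
have more than one element) and every nontrivial normal subgroup of `G` is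
transitive on all but at most one of the sets `X_i`. -/
def PreGeom.NormalBasic {X I : Type*} (Γ : PreGeom X I) (G : Type*) [Group G] [MulAction G X] :
    Prop :=
  (∃ i j : I, i ≠ j ∧ {x : X | Γ.t x = i}.Nontrivial ∧ {x : X | Γ.t x = j}.Nontrivial) ∧
  (∀ N : Subgroup G, N.Normal → N ≠ ⊥ →
    ∀ i j : I, i ≠ j → SubTransOn Γ N i ∨ SubTransOn Γ N j)

/-- The incidence graph of `Γ` is complete multipartite. -/
def PreGeom.CompleteMultipartite {X I : Type*} (Γ : PreGeom X I) : Prop :=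
  ∀ x y : X, Γ.t x ≠ Γ.t y → Γ.incid x y

/-- `G` is quasiprimitive on the elements of type `i`. -/
def PreGeom.QPOn {X I : Type*} (Γ : PreGeom X I) (G : Type*) [Group G] [MulAction G X]
    (i : I) : Prop :=
  ∀ N : Subgroup G, N.Normal → N ≠ ⊥ → SubTransOn Γ N i

/-- `G` is primitive on the elements of type `i`: transitive, and every
`G`-invariant block system is trivial. -/
def PreGeom.PrimitiveOn {X I : Type*} (Γ : PreGeom X I) (G : Type*) [Group G] [MulAction G X]
    (i : I) : Prop :=
  (∀ x y : X, Γ.t x = i → Γ.t y = i → ∃ g : G, g • x = y) ∧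
  ∀ B : Set X, B ⊆ {x | Γ.t x = i} →
    (∀ g : G, g • B = B ∨ Disjoint (g • B) B) →
    B.Subsingleton ∨ B = {x | Γ.t x = i}

/-- `Γ` is decomposable: it is a direct sum of two smaller pregeometries,
i.e. the type set splits into two nonempty parts with complete incidence
between elements whose types lie in different parts. -/
def PreGeom.Decomposable {X I : Type*} (Γ : PreGeom X I) : Prop :=
  ∃ J : Set I, (∃ i ∈ J, ∃ x : X, Γ.t x = i) ∧ (∃ i ∉ J, ∃ x : X, Γ.t x = i) ∧
    ∀ x y : X, Γ.t x ∈ J → Γ.t y ∉ J → Γ.incid x y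

/-- Auxiliary: from a path in the `{k,j}` truncation from an element of type
`k` to an element of type `j` we can extract a single incident pair of types
`k`, `j`. -/
lemma PreGeom.edge_extract {X I : Type*} (Γ : PreGeom X I) {k j : I} (hkj : k ≠ j) :
    ∀ x y : X, Relation.ReflTransGen
      (fun a b => Γ.incid a b ∧ Γ.t a ∈ ({k, j} : Set I) ∧ Γ.t b ∈ ({k, j} : Set I)) x y →
      Γ.t x = k → Γ.t y = j → ∃ a b : X, Γ.incid a b ∧ Γ.t a = k ∧ Γ.t b = j := by
  intro x y h
  induction h with
  | refl => intro hx hy; exact absurd (hx.symm.trans hy) hkj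
  | @tail b c hp hstep ih =>
    intro hx hy
    obtain ⟨hinc, hta, -⟩ := hstep
    simp only [Set.mem_insert_iff, Set.mem_singleton_iff] at hta
    rcases hta with h1 | h1
    · exact ⟨b, c, hinc, h1, hy⟩
    · exact ih hx h1

/-- Auxiliary: if no element has type `i`, a path in the `{i,j}` truncation is
constant. -/
lemma PreGeom.path_eq {X I : Type*} (Γ : PreGeom X I) {i j : I}
    (hXi : ∀ x : X, Γ.t x ≠ i) :
    ∀ x y : X, Relation.ReflTransGen
      (fun a b => Γ.incid a b ∧ Γ.t a ∈ ({i, j} : Set I) ∧ Γ.t b ∈ ({i, j} : Set I)) x y →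
      x = y := by
  intro x y h
  induction h with
  | refl => rfl
  | @tail b c hp hstep ih =>
    obtain ⟨hinc, hta, htb⟩ := hstep
    simp only [Set.mem_insert_iff, Set.mem_singleton_iff] at hta htb
    have h1 : Γ.t b = j := by
      rcases hta with h1 | h1
      · exact absurd h1 (hXi b)
      · exact h1
    have h2 : Γ.t c = j := by
      rcases htb with h2 | h2
      · exact absurd h2 (hXi c)
      · exact h2
    by_cases hbc : b = c
    · exact ih.trans hbc
    · exact absurd (h1.trans h2.symm) (Γ.diff b c hinc hbc)

/-- Lemma 3.3: Let Γ be a pregeometry with all rank 2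
truncations connected and G ≤ Aut Γ transitive on each X_i.  If Γ is fully
G-primitive and indecomposable, then Γ is fully G-faithful. -/
theorem indecomposable_fully_primitive_implies_fully_faithful
    {X I G : Type*} [Group G] [MulAction G X]
    (Γ : PreGeom X I)
    (hacts : Γ.ActsOn G) (htrans : Γ.TransTypes G) (hconn : Γ.Rank2Conn)
    (hprim : ∀ i : I, Γ.PrimitiveOn G i)
    (hindec : ¬ Γ.Decomposable) :
    ∀ i : I, Γ.FaithfulOn G i := by
  intro i g hg
  by_contra hg1
  classical
  obtain ⟨ht, hinc, hfaith⟩ := hacts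
  -- the kernel of the action of `G` on the elements of type `i`
  let K : Subgroup G :=
    { carrier := {n : G | ∀ x : X, Γ.t x = i → n • x = x}
      one_mem' := fun x _ => one_smul G x
      mul_mem' := by
        intro a b ha hb x hx
        rw [mul_smul, hb x hx, ha x hx]
      inv_mem' := by
        intro a ha x hx
        conv_lhs => rw [← ha x hx]
        exact inv_smul_smul a x }
  have hmem : ∀ n : G, n ∈ K ↔ ∀ x : X, Γ.t x = i → n • x = x := fun n => Iff.rfl
  have hKnorm : ∀ h n : G, n ∈ K → h * n * h⁻¹ ∈ K := by
    intro h n hn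
    rw [hmem] at hn ⊢
    intro x hx
    have hx' : Γ.t (h⁻¹ • x) = i := (ht h⁻¹ x).trans hx
    calc (h * n * h⁻¹) • x = h • n • h⁻¹ • x := by rw [mul_smul, mul_smul]
      _ = h • h⁻¹ • x := by rw [hn _ hx']
      _ = x := smul_inv_smul h x
  -- the set of types on which `K` acts trivially
  set J' : Set I := {k | ∀ x : X, Γ.t x = k → ∀ n ∈ K, n • x = x} with hJ'
  have hiJ : i ∈ J' := fun x hx n hn => (hmem n).1 hn x hx
  -- Step 1 : for `j ∉ J'`, `K` is transitive on the elements of type `j`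
  have step1 : ∀ j : I, j ∉ J' → ∀ y y' : X, Γ.t y = j → Γ.t y' = j →
      ∃ n ∈ K, n • y = y' := by
    intro j hj
    simp only [hJ', Set.mem_setOf_eq] at hj
    push_neg at hj
    obtain ⟨x, hx, n0, hn0, hn0x⟩ := hj
    set B : Set X := {z | ∃ n ∈ K, n • x = z} with hB
    have hBsub : B ⊆ {z | Γ.t z = j} := by
      rintro z ⟨n, hn, rfl⟩
      simpa [ht n x] using hx
    have hblocks : ∀ h : G, h • B = B ∨ Disjoint (h • B) B := by
      intro h
      by_cases hcase : h • x ∈ B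
      · left
        obtain ⟨m, hm, hmx⟩ := hcase
        ext z
        simp only [Set.mem_smul_set]
        constructor
        · rintro ⟨w, ⟨n, hn, rfl⟩, rfl⟩
          refine ⟨h * n * h⁻¹ * m, K.mul_mem (hKnorm h n hn) hm, ?_⟩
          calc (h * n * h⁻¹ * m) • x = (h * n * h⁻¹) • m • x := by rw [mul_smul]
            _ = (h * n * h⁻¹) • h • x := by rw [hmx]
            _ = h • n • h⁻¹ • h • x := by rw [mul_smul, mul_smul]
            _ = h • n • x := by rw [inv_smul_smul]
        · rintro ⟨n, hn, rfl⟩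
          refine ⟨(h⁻¹ * (n * m⁻¹) * h⁻¹⁻¹) • x,
            ⟨h⁻¹ * (n * m⁻¹) * h⁻¹⁻¹, hKnorm h⁻¹ (n * m⁻¹) (K.mul_mem hn (K.inv_mem hm)),
              rfl⟩, ?_⟩
          have e : h * (h⁻¹ * (n * m⁻¹) * h⁻¹⁻¹) = n * m⁻¹ * h := by group
          rw [← mul_smul, e, mul_smul, mul_smul, ← hmx, inv_smul_smul]
      · right
        rw [Set.disjoint_left]
        rintro z ⟨w, ⟨n, hn, rfl⟩, rfl⟩ ⟨n', hn', hz⟩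
        refine hcase ⟨(h * n * h⁻¹)⁻¹ * n', K.mul_mem (K.inv_mem (hKnorm h n hn)) hn', ?_⟩
        have e : (h * n * h⁻¹)⁻¹ = h * n⁻¹ * h⁻¹ := by group
        have hz' : n' • x = h • n • x := hz
        rw [mul_smul, hz', e, mul_smul, mul_smul]
        simp only [inv_smul_smul]
    rcases (hprim j).2 B hBsub hblocks with hsub | hBeq
    · exact absurd (hsub ⟨n0, hn0, rfl⟩ ⟨1, K.one_mem, one_smul G x⟩) hn0x
    · intro y y' hy hy'
      have hyB : y ∈ B := by rw [hBeq]; exact hy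
      have hyB' : y' ∈ B := by rw [hBeq]; exact hy'
      obtain ⟨n1, hn1, hn1x⟩ := hyB
      obtain ⟨n2, hn2, hn2x⟩ := hyB'
      refine ⟨n2 * n1⁻¹, K.mul_mem hn2 (K.inv_mem hn1), ?_⟩
      rw [mul_smul, ← hn1x, inv_smul_smul, hn2x]
  -- Step 2 : complete incidence between types in `J'` and types not in `J'`
  have step2 : ∀ x y : X, Γ.t x ∈ J' → Γ.t y ∉ J' → Γ.incid x y := by
    intro x y hxJ hyJ
    have hkj : Γ.t x ≠ Γ.t y := fun h => hyJ (h ▸ hxJ)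
    have hpath := hconn (Γ.t x) (Γ.t y) hkj x y (Set.mem_insert _ _)
      (Set.mem_insert_of_mem _ rfl)
    obtain ⟨a, b, hab, hak, hbj⟩ := Γ.edge_extract hkj x y hpath rfl rfl
    have hall : ∀ y' : X, Γ.t y' = Γ.t y → Γ.incid a y' := by
      intro y' hy'
      obtain ⟨n, hn, hnb⟩ := step1 (Γ.t y) hyJ b y' hbj hy'
      have hna : n • a = a := hxJ a hak n hn
      have h2 := (hinc n a b).2 hab
      rwa [hna, hnb] at h2
    obtain ⟨h, hha⟩ := htrans a x hak
    have h2 : Γ.incid a (h⁻¹ • y) := hall _ (ht h⁻¹ y)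
    have h3 := (hinc h a (h⁻¹ • y)).2 h2
    rwa [hha, smul_inv_smul] at h3
  -- Step 3 : indecomposability forces one side of `J'` to contain no elements
  have key : ¬ ((∃ k ∈ J', ∃ x : X, Γ.t x = k) ∧ (∃ k ∉ J', ∃ x : X, Γ.t x = k)) := by
    rintro ⟨h1, h2⟩
    refine hindec ⟨J', h1, h2, ?_⟩
    intro x y hx hy
    exact step2 x y hx hy
  rcases not_and_or.mp key with hA | hB
  · -- no element has a type in `J'`; in particular `X_i = ∅`
    have hXi : ∀ x : X, Γ.t x ≠ i := fun x hx => hA ⟨i, hiJ, x, hx⟩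
    have hx0 : ∃ x0 : X, g • x0 ≠ x0 := by
      by_contra hc
      push_neg at hc
      exact hg1 (hfaith g hc)
    obtain ⟨x0, hx0⟩ := hx0
    have hji : i ≠ Γ.t x0 := fun h => hXi x0 h.symm
    have hpath := hconn i (Γ.t x0) hji x0 (g • x0)
      (Set.mem_insert_of_mem _ rfl) (Set.mem_insert_of_mem _ (ht g x0))
    exact hx0 (Γ.path_eq hXi x0 (g • x0) hpath).symm
  · -- every type lies in `J'`, so `K` acts trivially everywhere
    have hall : ∀ x : X, g • x = x := by
      intro x
      by_contra hne
      refine hB ⟨Γ.t x, fun hmemJ => hne (hmemJ x rfl g ?_), x, rfl⟩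
      exact (hmem g).2 hg
    exact hg1 (hfaith g hall)
end

section
/- Let Γ be a pregeometry with all rank 2 truncations connected and G ≤ Aut(Γ) transitive on each X_i, and suppose Γ is fully G-primitive. Then there exists a unique partition {I_1,…,I_ℓ} of the type set I such that each truncation Γ_{I_n} is indecomposable, fully G-faithful, fully G-primitive, and Γ = Γ_{I_1} ⊕ … ⊕ Γ_{I_ℓ}. -/
open Pointwise

/-- The `J`-truncation of `Γ` is decomposable: `J` splits into two parts,
both containing the type of some element, with complete incidence between
elements whose types lie in different parts. -/
def PreGeom.DecompOn {X I : Type*} (Γ : PreGeom X I) (J : Set I) : Prop :=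
  ∃ J' : Set I, J' ⊆ J ∧ (∃ i ∈ J', ∃ x : X, Γ.t x = i) ∧
    (∃ i ∈ J \ J', ∃ x : X, Γ.t x = i) ∧
    ∀ x y : X, Γ.t x ∈ J' → Γ.t y ∈ J \ J' → Γ.incid x y

/-- The `J`-truncation of `Γ` is fully faithful for the induced group `G^{Γ_J}`:
for each `j ∈ J`, any element of `G` acting trivially on the elements of type
`j` acts trivially on all elements with type in `J`. -/
def PreGeom.FullyFaithfulOn {X I : Type*} (Γ : PreGeom X I) (G : Type*) [Group G]
    [MulAction G X] (J : Set I) : Prop :=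
  ∀ j ∈ J, ∀ g : G, (∀ x : X, Γ.t x = j → g • x = x) → ∀ x : X, Γ.t x ∈ J → g • x = x

namespace PGAux

variable {X I : Type*} (Γ : PreGeom X I)

/-- Complete incidence between types `i` and `j`. -/
def Cpl (i j : I) : Prop := ∀ x y : X, Γ.t x = i → Γ.t y = j → Γ.incid x y

/-- Types `i` and `j` are "adjacent": distinct and not completely incident. -/
def Adj (i j : I) : Prop := i ≠ j ∧ ¬ Cpl Γ i j

/-- Connected in the adjacency graph. -/
def Rel (i j : I) : Prop := Relation.ReflTransGen (Adj Γ) i j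

lemma adj_symm {i j : I} (h : Adj Γ i j) : Adj Γ j i :=
  ⟨h.1.symm, fun c => h.2 fun x y hx hy => Γ.symm _ _ (c y x hy hx)⟩

lemma rel_symm {i j : I} (h : Rel Γ i j) : Rel Γ j i := by
  induction h with
  | refl => exact Relation.ReflTransGen.refl
  | tail _ hadj ih => exact Relation.ReflTransGen.head (adj_symm Γ hadj) ih

/-- The setoid of connectedness on types. -/
def relSetoid : Setoid I :=
  ⟨Rel Γ, ⟨fun _ => Relation.ReflTransGen.refl, fun h => rel_symm Γ h,
    fun h1 h2 => Relation.ReflTransGen.trans h1 h2⟩⟩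

lemma exists_head {α : Type*} {r : α → α → Prop} {x y : α}
    (h : Relation.ReflTransGen r x y) : x = y ∨ ∃ z, r x z ∧ z ≠ x := by
  induction h using Relation.ReflTransGen.head_induction_on with
  | refl => exact Or.inl rfl
  | head h' hcy ih =>
    rename_i a c
    by_cases hca : c = a
    · subst hca
      rcases ih with rfl | h2
      · exact Or.inl rfl
      · exact Or.inr h2
    · exact Or.inr ⟨c, h', hca⟩

/-- From any element of type `i`, rank-2 connectivity yields an incident
element of type `k` for any other type `k`. -/
lemma exists_incid (hconn : Γ.Rank2Conn) (hsurj : Function.Surjective Γ.t)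
    {i k : I} (hik : i ≠ k) (x : X) (hx : Γ.t x = i) :
    ∃ z, Γ.incid x z ∧ Γ.t z = k := by
  obtain ⟨y, hy⟩ := hsurj k
  have hpath := hconn i k hik x y (Or.inl hx) (Or.inr hy)
  rcases exists_head hpath with rfl | ⟨z, ⟨hxz, _, hz⟩, hne⟩
  · exact absurd (hx ▸ hy) (by simpa [hx, hy] using hik)
  · have hne' : Γ.t z ≠ i := fun h =>
      Γ.diff x z hxz (Ne.symm hne) (by rw [hx, h])
    rcases hz with hz | hz
    · exact absurd hz hne'
    · exact ⟨z, hxz, hz⟩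

/-- Key transfer lemma: if `i` and `k` are adjacent and `g` fixes all elements
of type `i`, then `g` fixes all elements of type `k`. -/
lemma transfer {G : Type*} [Group G] [MulAction G X]
    (hacts : Γ.ActsOn G) (hconn : Γ.Rank2Conn) (hsurj : Function.Surjective Γ.t)
    (hprim : ∀ i : I, Γ.PrimitiveOn G i)
    {i k : I} (hadj : Adj Γ i k) (g : G) (hg : ∀ x, Γ.t x = i → g • x = x) :
    ∀ y, Γ.t y = k → g • y = y := by
  obtain ⟨htp, hincid, _⟩ := hacts
  set N : Set G := {n : G | ∀ x : X, Γ.t x = i → n • x = x} with hN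
  have hNone : (1 : G) ∈ N := fun x _ => one_smul _ _
  have hNmul : ∀ a b : G, a ∈ N → b ∈ N → a * b ∈ N := fun a b ha hb x hx => by
    rw [mul_smul, hb x hx, ha x hx]
  have hNinv : ∀ a : G, a ∈ N → a⁻¹ ∈ N := fun a ha x hx => by
    conv_lhs => rw [← ha x hx]
    rw [inv_smul_smul]
  have hNconj : ∀ h : G, ∀ n ∈ N, h * n * h⁻¹ ∈ N := fun h n hn x hx => by
    have h1 : Γ.t (h⁻¹ • x) = i := (htp h⁻¹ x).trans hx
    rw [mul_smul, mul_smul, hn _ h1, smul_inv_smul]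
  intro y hy
  set B : Set X := {x | ∃ n ∈ N, n • y = x} with hB
  have hBy : y ∈ B := ⟨1, hNone, one_smul _ _⟩
  have hBsub : B ⊆ {x : X | Γ.t x = k} := by
    rintro x ⟨n, _, rfl⟩; exact (htp n y).trans hy
  have hblock : ∀ h : G, h • B = B ∨ Disjoint (h • B) B := by
    intro h
    by_cases hmem : h • y ∈ B
    · left
      obtain ⟨n0, hn0, hn0y⟩ := hmem
      ext x
      rw [Set.mem_smul_set_iff_inv_smul_mem]
      constructor
      · rintro ⟨n, hn, hny⟩
        refine ⟨h * n * h⁻¹ * n0, hNmul _ _ (hNconj h n hn) hn0, ?_⟩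
        rw [mul_smul, mul_smul, mul_smul, hn0y, inv_smul_smul, hny, smul_inv_smul]
      · rintro ⟨n, hn, rfl⟩
        refine ⟨h⁻¹ * (n * n0⁻¹) * h, ?_, ?_⟩
        · have := hNconj h⁻¹ (n * n0⁻¹) (hNmul _ _ hn (hNinv _ hn0))
          simpa using this
        · rw [mul_smul, mul_smul, mul_smul, ← hn0y, inv_smul_smul]
    · right
      rw [Set.disjoint_left]
      rintro x hx1 ⟨n2, hn2, rfl⟩
      rw [Set.mem_smul_set_iff_inv_smul_mem] at hx1
      obtain ⟨n1, hn1, hn1y⟩ := hx1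
      apply hmem
      refine ⟨h * n1⁻¹ * h⁻¹ * n2, hNmul _ _ (hNconj h n1⁻¹ (hNinv _ hn1)) hn2, ?_⟩
      have : h • (n1 • y) = n2 • y := by
        rw [hn1y, smul_inv_smul]
      rw [mul_smul, mul_smul, mul_smul, ← this, inv_smul_smul, inv_smul_smul]
  rcases (hprim k).2 B hBsub hblock with hss | heq
  · exact hss ⟨g, hg, rfl⟩ hBy
  · exfalso
    apply hadj.2
    intro x y' hx hy'
    obtain ⟨z, hxz, hz⟩ := exists_incid Γ hconn hsurj hadj.1 x hx
    have hzB : z ∈ B := by rw [heq]; exact hz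
    have hy'B : y' ∈ B := by rw [heq]; exact hy'
    obtain ⟨n1, hn1, hn1y⟩ := hzB
    obtain ⟨n2, hn2, hn2y⟩ := hy'B
    have hm : n2 * n1⁻¹ ∈ N := hNmul _ _ hn2 (hNinv _ hn1)
    have hzy' : (n2 * n1⁻¹) • z = y' := by
      rw [← hn1y, mul_smul, inv_smul_smul, hn2y]
    have := (hincid (n2 * n1⁻¹) x z).2 hxz
    rwa [hm x hx, hzy'] at this

/-- If `j` and `k` are connected and `g` fixes all elements of type `j`,
then it fixes all elements of type `k`. -/
lemma rel_fix {G : Type*} [Group G] [MulAction G X]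
    (hacts : Γ.ActsOn G) (hconn : Γ.Rank2Conn) (hsurj : Function.Surjective Γ.t)
    (hprim : ∀ i : I, Γ.PrimitiveOn G i)
    {j k : I} (h : Rel Γ j k) (g : G) (hg : ∀ x, Γ.t x = j → g • x = x) :
    ∀ x, Γ.t x = k → g • x = x := by
  induction h with
  | refl => exact hg
  | tail _ hadj ih => exact transfer Γ hacts hconn hsurj hprim hadj g ih

end PGAux

/-- Corollary 3.4: If Γ (with all rank 2 truncations connected
and G ≤ Aut Γ transitive on each X_i) is fully G-primitive, then there is a
unique partition of the type set I such that each part gives an indecomposable,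
fully G-faithful, fully G-primitive truncation, and Γ is the direct sum of
these truncations. -/
theorem unique_decomposition_fully_primitive
    {X I G : Type*} [Group G] [MulAction G X]
    (Γ : PreGeom X I)
    (hacts : Γ.ActsOn G) (htrans : Γ.TransTypes G) (hconn : Γ.Rank2Conn)
    (hsurj : Function.Surjective Γ.t)
    (hprim : ∀ i : I, Γ.PrimitiveOn G i) :
    ∃! P : Set (Set I), Setoid.IsPartition P ∧
      (∀ J ∈ P, ¬ Γ.DecompOn J ∧ Γ.FullyFaithfulOn G J ∧ ∀ j ∈ J, Γ.PrimitiveOn G j) ∧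
      (∀ J ∈ P, ∀ K ∈ P, J ≠ K → ∀ x y : X, Γ.t x ∈ J → Γ.t y ∈ K → Γ.incid x y) := by
  classical
  refine ⟨(PGAux.relSetoid Γ).classes, ⟨Setoid.isPartition_classes _, ?_, ?_⟩, ?_⟩
  · -- properties of each class
    rintro J ⟨b, rfl⟩
    refine ⟨?_, ?_, fun j _ => hprim j⟩
    · -- indecomposable
      rintro ⟨J', hJ'sub, ⟨i, hiJ', -⟩, ⟨k, hkJK, -⟩, hcpl⟩
      have hib : PGAux.Rel Γ i b := hJ'sub hiJ'
      have hik : PGAux.Rel Γ i k := hib.trans (PGAux.rel_symm Γ hkJK.1)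
      have key : ∀ c, Relation.ReflTransGen (PGAux.Adj Γ) i c →
          c ∈ {x | PGAux.Rel Γ x b} \ J' → False := by
        intro c hc
        induction hc with
        | refl => exact fun hcc => hcc.2 hiJ'
        | @tail m c' hpath hadj ih =>
          intro hc'
          by_cases hm : m ∈ J'
          · have h2 := hadj.2
            rw [PGAux.Cpl] at h2
            push_neg at h2
            obtain ⟨x, y, hx, hy, hnxy⟩ := h2
            exact hnxy (hcpl x y (by rw [hx]; exact hm) (by rw [hy]; exact hc'))
          · exact ih ⟨(PGAux.rel_symm Γ hpath).trans hib, hm⟩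
      exact key k hik hkJK
    · -- fully faithful
      intro j hjJ g hg x hx
      have hrel : PGAux.Rel Γ j (Γ.t x) := hjJ.trans (PGAux.rel_symm Γ hx)
      exact PGAux.rel_fix Γ hacts hconn hsurj hprim hrel g hg x rfl
  · -- complete incidence between distinct classes
    rintro J ⟨b, rfl⟩ K ⟨c, rfl⟩ hne x y hx hy
    by_contra hnxy
    have hrel : PGAux.Rel Γ (Γ.t x) (Γ.t y) := by
      by_cases he : Γ.t x = Γ.t y
      · rw [he]
        exact Relation.ReflTransGen.refl
      · exact Relation.ReflTransGen.single ⟨he, fun hc => hnxy (hc x y rfl rfl)⟩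
    have hbc : PGAux.Rel Γ b c :=
      (PGAux.rel_symm Γ hx).trans (hrel.trans hy)
    apply hne
    ext a
    constructor
    · intro ha
      exact (ha : PGAux.Rel Γ a b).trans hbc
    · intro ha
      exact (ha : PGAux.Rel Γ a c).trans (PGAux.rel_symm Γ hbc)
  · -- uniqueness
    rintro Q ⟨hQpart, hQprops, hQcpl⟩
    have hmemJ : ∀ J ∈ Q, ∀ i ∈ J, J = {a | PGAux.Rel Γ a i} := by
      intro J hJQ i hiJ
      have step : ∀ m b : I, PGAux.Adj Γ m b → b ∈ J → m ∈ J := by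
        intro m b hadj hbJ
        by_contra hmJ
        obtain ⟨K, ⟨hKQ, hmK⟩, -⟩ := hQpart.2 m
        have hKJ : K ≠ J := fun h => hmJ (h ▸ hmK)
        have h2 := hadj.2
        rw [PGAux.Cpl] at h2
        push_neg at h2
        obtain ⟨x, y, hx, hy, hnxy⟩ := h2
        exact hnxy (hQcpl K hKQ J hJQ hKJ x y (by rw [hx]; exact hmK)
          (by rw [hy]; exact hbJ))
      have hsubJ : ∀ a c : I, Relation.ReflTransGen (PGAux.Adj Γ) a c →
          c ∈ J → a ∈ J := by
        intro a c h
        induction h with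
        | refl => exact id
        | @tail m c' hpath hadj ih => exact fun hc => ih (step m c' hadj hc)
      apply Set.eq_of_subset_of_subset
      · intro k hkJ
        by_contra hnk
        apply (hQprops J hJQ).1
        refine ⟨{a | a ∈ J ∧ PGAux.Rel Γ a i}, fun a ha => ha.1,
          ⟨i, ⟨hiJ, Relation.ReflTransGen.refl⟩, hsurj i⟩,
          ⟨k, ⟨hkJ, fun h => hnk h.2⟩, hsurj k⟩, ?_⟩
        intro x y hxJ' hyd
        have hyJ : Γ.t y ∈ J := hyd.1
        have hyn : ¬ PGAux.Rel Γ (Γ.t y) i := fun h => hyd.2 ⟨hyJ, h⟩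
        by_contra hnxy
        apply hyn
        have hne' : Γ.t x ≠ Γ.t y := by
          intro he
          exact hyn (he ▸ hxJ'.2)
        have hadj : PGAux.Adj Γ (Γ.t y) (Γ.t x) :=
          PGAux.adj_symm Γ ⟨hne', fun hc => hnxy (hc x y rfl rfl)⟩
        exact (Relation.ReflTransGen.single hadj).trans hxJ'.2
      · intro a ha
        exact hsubJ a i ha hiJ
    apply Set.eq_of_subset_of_subset
    · intro C hCQ
      have hCne : C.Nonempty :=
        Set.nonempty_iff_ne_empty.2 (fun h => hQpart.1 (h ▸ hCQ))
      obtain ⟨i, hiC⟩ := hCne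
      exact ⟨i, hmemJ C hCQ i hiC⟩
    · rintro C ⟨b, rfl⟩
      obtain ⟨J, ⟨hJQ, hbJ⟩, -⟩ := hQpart.2 b
      show {a | PGAux.Rel Γ a b} ∈ Q
      rw [← hmemJ J hJQ b hbJ]
      exact hJQ
end

section
/- Let Γ be a pregeometry of rank at least 2 with all rank 2 truncations connected, and G ≤ Aut(Γ) transitive on each X_i, such that every nontrivial normal subgroup of G is transitive on all but at most one of the X_i. Then either the incidence graph of Γ is complete multipartite, or G acts faithfully on at least two of the X_i. -/
open Pointwise

lemma mem_kerOn_iff {X I : Type*} {G : Type*} [Group G] [MulAction G X] (Γ : PreGeom X I)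
    (i : I) (g : G) : g ∈ kerOn Γ G i ↔ ∀ x : X, Γ.t x = i → g • x = x := by
  simp [kerOn, Subgroup.mem_iInf, MulAction.mem_stabilizer_iff, Set.mem_setOf_eq]

lemma kerOn_normal {X I : Type*} {G : Type*} [Group G] [MulAction G X] (Γ : PreGeom X I)
    (hacts : Γ.ActsOn G) (i : I) : (kerOn Γ G i).Normal := by
  constructor
  intro n hn g
  rw [mem_kerOn_iff] at hn ⊢
  intro x hx
  have ht : Γ.t (g⁻¹ • x) = i := (hacts.1 g⁻¹ x).trans hx
  have h2 := hn _ ht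
  rw [mul_smul, mul_smul, h2, smul_inv_smul]

/-- Every element of type `a` has an incident element of type `b`. -/
lemma neighbor_exists {X I : Type*} (Γ : PreGeom X I) (hconn : Γ.Rank2Conn)
    (hsurj : Function.Surjective Γ.t) {a b : I} (hab : a ≠ b) (x : X) (hx : Γ.t x = a) :
    ∃ w : X, Γ.t w = b ∧ Γ.incid x w := by
  obtain ⟨z, hz⟩ := hsurj b
  have hpath := hconn a b hab x z (Or.inl hx) (Or.inr hz)
  clear hx
  induction hpath using Relation.ReflTransGen.head_induction_on with
  | refl => exact ⟨z, hz, Γ.refl z⟩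
  | head hstep _ ih =>
    rename_i u c _
    obtain ⟨hinc, hu, hc⟩ := hstep
    rcases hu with hu | hu
    · rcases hc with hc | hc
      · by_cases huc : u = c
        · exact huc ▸ ih
        · exact absurd (hu.trans hc.symm) (Γ.diff u c hinc huc)
      · exact ⟨c, hc, hinc⟩
    · exact ⟨u, hu, Γ.refl u⟩

lemma key_incid {X I : Type*} {G : Type*} [Group G] [MulAction G X] (Γ : PreGeom X I)
    (hacts : Γ.ActsOn G) (hconn : Γ.Rank2Conn) (hsurj : Function.Surjective Γ.t)
    (hnormal : ∀ N : Subgroup G, N.Normal → N ≠ ⊥ →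
      ∀ i j : I, i ≠ j → SubTransOn Γ N i ∨ SubTransOn Γ N j)
    (x y : X) (hf : ¬ Γ.FaithfulOn G (Γ.t x)) (hab : Γ.t x ≠ Γ.t y) :
    Γ.incid x y := by
  set a := Γ.t x with ha
  set b := Γ.t y with hb
  -- the kernel on type a is nontrivial
  have hK : kerOn Γ G a ≠ ⊥ := by
    intro hbot
    apply hf
    intro g hg
    have : g ∈ kerOn Γ G a := (mem_kerOn_iff Γ a g).mpr hg
    rw [hbot, Subgroup.mem_bot] at this
    exact this
  have hfix : ∀ n ∈ kerOn Γ G a, ∀ u : X, Γ.t u = a → n • u = u :=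
    fun n hn => (mem_kerOn_iff Γ a n).mp hn
  rcases hnormal _ (kerOn_normal Γ hacts a) hK a b hab with htr | htr
  · -- kernel transitive on X_a : X_a is a singleton {x}
    have hsing : ∀ u : X, Γ.t u = a → u = x := by
      intro u hu
      obtain ⟨n, hn, hnx⟩ := htr x u rfl hu
      rw [hfix n hn x rfl] at hnx
      exact hnx.symm
    obtain ⟨w, hw, hinc⟩ := neighbor_exists Γ hconn hsurj hab.symm y rfl
    exact Γ.symm _ _ (hsing w hw ▸ hinc)
  · -- kernel transitive on X_b
    obtain ⟨w, hw, hinc⟩ := neighbor_exists Γ hconn hsurj hab x rfl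
    obtain ⟨n, hn, hnw⟩ := htr w y hw rfl
    have : Γ.incid (n • x) (n • w) := (hacts.2.1 n x w).mpr hinc
    rwa [hfix n hn x rfl, hnw] at this

/-- Lemma 4.1: Let Γ be a pregeometry of rank ≥ 2 with all rank
2 truncations connected and G ≤ Aut Γ transitive on each X_i, such that every
nontrivial normal subgroup of G is transitive on all but at most one of the
X_i.  Then either Γ is complete multipartite, or G is faithful on at least two
of the X_i. -/
theorem complete_multipartite_or_two_faithful
    {X I G : Type*} [Group G] [MulAction G X]
    (Γ : PreGeom X I)
    (hacts : Γ.ActsOn G) (htrans : Γ.TransTypes G) (hconn : Γ.Rank2Conn)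
    (hsurj : Function.Surjective Γ.t)
    (hrank : ∃ i j : I, i ≠ j)
    (hnormal : ∀ N : Subgroup G, N.Normal → N ≠ ⊥ →
      ∀ i j : I, i ≠ j → SubTransOn Γ N i ∨ SubTransOn Γ N j) :
    Γ.CompleteMultipartite ∨
      ∃ i j : I, i ≠ j ∧ Γ.FaithfulOn G i ∧ Γ.FaithfulOn G j := by
  by_contra h
  push_neg at h
  obtain ⟨hCM, hfaith⟩ := h
  rw [PreGeom.CompleteMultipartite] at hCM
  push_neg at hCM
  obtain ⟨x, y, hxy, hninc⟩ := hCM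
  by_cases hfa : Γ.FaithfulOn G (Γ.t x)
  · have hfb : ¬ Γ.FaithfulOn G (Γ.t y) := hfaith _ _ hxy hfa
    exact hninc (Γ.symm _ _
      (key_incid Γ hacts hconn hsurj hnormal y x hfb (Ne.symm hxy)))
  · exact hninc (key_incid Γ hacts hconn hsurj hnormal x y hfa hxy)
end

section
/- Let T = (Z_p)^d identified with the additive group of the field F_{p^d}, let H = {(h,h) : h ∈ F_{p^d}^*} acting on T × T by componentwise field multiplication, and let G = (T × T)⋊H. For λ ∈ F_{p^d} set T_λ = {(u, λu) : u ∈ T} and T_∞ = 1 × T. For a subset Λ ⊆ F_{p^d} ∪ {∞} containing 0 and ∞, form the pregeometry Γ_Λ with type set Λ, elements of type λ being the right cosets of T_λ·H in G with G acting by right multiplication, and any two elements of distinct types incident. Then Γ_Λ is isomorphic to the complete multipartite pregeometry Γ(|Λ|, p^d), the kernel of the G-action on the type-λ part is exactly T_λ, and Γ_Λ is G-normal-basic. -/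
/-- Conversion of additive automorphisms to multiplicative automorphisms of the
corresponding multiplicative group. -/
def addAutToMulAut (A : Type*) [AddGroup A] : Multiplicative (AddAut A) →* MulAut (Multiplicative A) where
  toFun e := AddEquiv.toMultiplicative e.toAdd
  map_one' := rfl
  map_mul' _ _ := rfl

/-- The action of the multiplicative group `Fˣ` of the field `F = F_{p^d}` on
`T × T = F × F` by simultaneous field multiplication, as a homomorphism into
the automorphism group. -/
noncomputable def scalarHom (p d : ℕ) [Fact p.Prime] :
    (GaloisField p d)ˣ →* MulAut (Multiplicative (GaloisField p d × GaloisField p d)) :=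
  (addAutToMulAut _).comp
    (DistribMulAction.toAddAut (GaloisField p d)ˣ (GaloisField p d × GaloisField p d))

/-- The group `G = (T × T) ⋊ H` with `T = (Z_p)^d` the additive group of
`F_{p^d}` and `H = {(h,h) : h ∈ F_{p^d}ˣ}` acting diagonally. -/
abbrev Gp (p d : ℕ) [Fact p.Prime] :=
  Multiplicative (GaloisField p d × GaloisField p d) ⋊[scalarHom p d] (GaloisField p d)ˣ

/-- The subgroups `T_λ = {(u, λu) : u ∈ T}` for `λ ∈ F_{p^d}` and
`T_∞ = 1 × T` (for `λ = none`), viewed inside `G`. -/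
noncomputable def Tpart (p d : ℕ) [Fact p.Prime] : Option (GaloisField p d) → Subgroup (Gp p d)
  | none => (AddSubgroup.toSubgroup
      (AddMonoidHom.inr (GaloisField p d) (GaloisField p d)).range).map SemidirectProduct.inl
  | some c => (AddSubgroup.toSubgroup
      ((AddMonoidHom.id (GaloisField p d)).prod (AddMonoidHom.mulLeft c)).range).map
        SemidirectProduct.inl

/-- The subgroup `H` of `G`. -/
noncomputable def Hpart (p d : ℕ) [Fact p.Prime] : Subgroup (Gp p d) :=
  (SemidirectProduct.inr : (GaloisField p d)ˣ →* Gp p d).range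

/-!
The linear form `coord l` on `F × F` has kernel the line `T_l`, and `cocycle l g = coord l g.left`
is a crossed homomorphism `G → F` twisted by `g ↦ g.right`, with kernel `T_l H`. It identifies the
part of type `l` with `F`, on which `g` acts by the affine map `v ↦ cocycle l g + g.right * v`; the
size of the part and the kernel of the action can be read off from this.

A nontrivial normal subgroup `N` either contains an element with `g.right ≠ 1`, whose commutators
with translations give every translation, or a nonzero translation `w`, whose conjugates under `H`
give every multiple of `w`. Distinct lines `T_l`, `T_m` meet trivially, so `w` avoids one of them,
and the multiples of `w` then move every point of that part to every other.
-/

namespace GaloisFieldPregeometry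

variable {p d : ℕ} [Fact p.Prime]

local notation "𝔽" => GaloisField p d

noncomputable def coord : Option 𝔽 → (𝔽 × 𝔽 →ₗ[𝔽] 𝔽)
  | none => LinearMap.fst 𝔽 𝔽 𝔽
  | some c => LinearMap.snd 𝔽 𝔽 𝔽 - c • LinearMap.fst 𝔽 𝔽 𝔽

@[simp] lemma coord_none_apply (w : 𝔽 × 𝔽) : coord none w = w.1 := rfl

@[simp] lemma coord_some_apply (c : 𝔽) (w : 𝔽 × 𝔽) : coord (some c) w = w.2 - c * w.1 := rfl

lemma coord_surjective (l : Option 𝔽) : Function.Surjective (coord l) := by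
  intro v
  cases l with
  | none => exact ⟨(v, 0), rfl⟩
  | some c => exact ⟨(0, v), by simp⟩

lemma eq_zero_of_coord_eq_zero {l m : Option 𝔽} (hlm : l ≠ m) {w : 𝔽 × 𝔽}
    (hl : coord l w = 0) (hm : coord m w = 0) : w = 0 := by
  match l, m with
  | none, none => exact absurd rfl hlm
  | none, some c => simp_all [Prod.ext_iff]
  | some c, none => simp_all [Prod.ext_iff]
  | some c, some c' =>
    have hc : c - c' ≠ 0 := sub_ne_zero.2 fun h => hlm (h ▸ rfl)
    simp only [coord_some_apply] at hl hm
    have h1 : w.1 = 0 := (mul_eq_zero.1 (by linear_combination hm - hl)).resolve_left hc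
    simp_all [Prod.ext_iff]

noncomputable def translation (w : 𝔽 × 𝔽) : Gp p d := SemidirectProduct.inl (Multiplicative.ofAdd w)

@[simp] lemma toAdd_scalarHom_apply (k : 𝔽ˣ) (x : Multiplicative (𝔽 × 𝔽)) :
    Multiplicative.toAdd (scalarHom p d k x) = (k : 𝔽) • Multiplicative.toAdd x := rfl

lemma toAdd_left_mul (g h : Gp p d) :
    Multiplicative.toAdd (g * h).left =
      Multiplicative.toAdd g.left + (g.right : 𝔽) • Multiplicative.toAdd h.left := rfl

@[simp] lemma translation_zero : translation (0 : 𝔽 × 𝔽) = 1 := rfl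

@[simp] lemma right_translation (w : 𝔽 × 𝔽) : (translation w).right = 1 := rfl

lemma eq_translation_of_right_eq_one {g : Gp p d} (hg : g.right = 1) :
    g = translation (Multiplicative.toAdd g.left) := by
  ext : 1
  · rfl
  · exact hg

lemma inr_mul_translation_mul_inr_inv (k : 𝔽ˣ) (w : 𝔽 × 𝔽) :
    SemidirectProduct.inr k * translation w * (SemidirectProduct.inr k)⁻¹ =
      translation ((k : 𝔽) • w) := by
  ext <;> simp [translation]

lemma translation_commutator (w : 𝔽 × 𝔽) (g : Gp p d) :
    translation w * g * (translation w)⁻¹ * g⁻¹ = translation ((1 - (g.right : 𝔽)) • w) := by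
  ext <;> simp [translation] <;> ring

noncomputable def cocycle (l : Option 𝔽) (g : Gp p d) : 𝔽 :=
  coord l (Multiplicative.toAdd g.left)

lemma cocycle_mul (l : Option 𝔽) (g h : Gp p d) :
    cocycle l (g * h) = cocycle l g + g.right * cocycle l h := by
  rw [cocycle, cocycle, cocycle, toAdd_left_mul, map_add, map_smul, smul_eq_mul]

@[simp] lemma cocycle_one (l : Option 𝔽) : cocycle l (1 : Gp p d) = 0 :=
  map_zero (coord l)

@[simp] lemma cocycle_translation (l : Option 𝔽) (w : 𝔽 × 𝔽) :
    cocycle l (translation w) = coord l w := rfl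

@[simp] lemma cocycle_inr (l : Option 𝔽) (k : 𝔽ˣ) :
    cocycle l (SemidirectProduct.inr k : Gp p d) = 0 :=
  map_zero (coord l)

lemma cocycle_inv (l : Option 𝔽) (g : Gp p d) :
    cocycle l g⁻¹ = -((g.right : 𝔽)⁻¹ * cocycle l g) := by
  have hg := cocycle_mul l g g⁻¹
  rw [mul_inv_cancel, cocycle_one] at hg
  have hr : (g.right : 𝔽) ≠ 0 := g.right.ne_zero
  field_simp
  linear_combination -hg

lemma cocycle_inv_mul (l : Option 𝔽) (g h : Gp p d) :
    cocycle l (g⁻¹ * h) = (g.right : 𝔽)⁻¹ * (cocycle l h - cocycle l g) := by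
  rw [cocycle_mul, cocycle_inv, SemidirectProduct.inv_right, Units.val_inv_eq_inv_val]
  ring

noncomputable def cocycleKer (l : Option 𝔽) : Subgroup (Gp p d) where
  carrier := {g | cocycle l g = 0}
  one_mem' := cocycle_one l
  mul_mem' {g h} hg hh := by simp_all [cocycle_mul]
  inv_mem' {g} hg := by simp_all [cocycle_inv]

lemma mem_Tpart_iff (l : Option 𝔽) (g : Gp p d) :
    g ∈ Tpart p d l ↔ g.right = 1 ∧ cocycle l g = 0 := by
  constructor
  · cases l with
    | none => rintro ⟨_, ⟨u, rfl⟩, rfl⟩; exact ⟨rfl, rfl⟩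
    | some c => rintro ⟨_, ⟨u, rfl⟩, rfl⟩; exact ⟨rfl, sub_self (c * u)⟩
  · rintro ⟨hr, hc⟩
    rw [eq_translation_of_right_eq_one hr] at hc ⊢
    set w := Multiplicative.toAdd g.left
    cases l with
    | none => exact ⟨Multiplicative.ofAdd w, ⟨w.2, Prod.ext hc.symm rfl⟩, rfl⟩
    | some c =>
      have hc : w.2 - c * w.1 = 0 := hc
      exact ⟨Multiplicative.ofAdd w, ⟨w.1, Prod.ext rfl (sub_eq_zero.1 hc).symm⟩, rfl⟩

lemma mem_sup_iff (l : Option 𝔽) (g : Gp p d) :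
    g ∈ Tpart p d l ⊔ Hpart p d ↔ cocycle l g = 0 := by
  constructor
  · refine fun hg => (sup_le (fun t ht => ?_) ?_ : _ ≤ cocycleKer l) hg
    · exact ((mem_Tpart_iff l t).1 ht).2
    · rintro _ ⟨k, rfl⟩
      exact cocycle_inr l k
  · intro hg
    rw [← SemidirectProduct.inl_left_mul_inr_right g]
    refine mul_mem (Subgroup.mem_sup_left ?_) (Subgroup.mem_sup_right ⟨g.right, rfl⟩)
    exact (mem_Tpart_iff l _).2 ⟨rfl, hg⟩

lemma mk_eq_mk_iff (l : Option 𝔽) (g h : Gp p d) :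
    (g : Gp p d ⧸ (Tpart p d l ⊔ Hpart p d)) = h ↔ cocycle l g = cocycle l h := by
  rw [QuotientGroup.eq, mem_sup_iff, cocycle_inv_mul,
    mul_eq_zero_iff_left (inv_ne_zero g.right.ne_zero), sub_eq_zero, eq_comm]

noncomputable def cosetCoord (l : Option 𝔽) : Gp p d ⧸ (Tpart p d l ⊔ Hpart p d) → 𝔽 :=
  Quotient.lift (cocycle l) fun g h hgh => (mk_eq_mk_iff l g h).1 (Quotient.sound hgh)

lemma cosetCoord_bijective (l : Option 𝔽) :
    Function.Bijective (cosetCoord (p := p) (d := d) l) := by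
  constructor
  · rintro ⟨g⟩ ⟨h⟩ hgh
    exact (mk_eq_mk_iff l g h).2 hgh
  · intro v
    obtain ⟨w, hw⟩ := coord_surjective l v
    exact ⟨translation w, hw⟩

lemma cosetCoord_smul (l : Option 𝔽) (g : Gp p d) (x : Gp p d ⧸ (Tpart p d l ⊔ Hpart p d)) :
    cosetCoord l (g • x) = cocycle l g + g.right * cosetCoord l x := by
  induction x using QuotientGroup.induction_on with
  | H h => exact cocycle_mul l g h

lemma card_quotient_sup (hd : d ≠ 0) (l : Option 𝔽) :
    Nat.card (Gp p d ⧸ (Tpart p d l ⊔ Hpart p d)) = p ^ d := by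
  rw [Nat.card_eq_of_bijective _ (cosetCoord_bijective l), GaloisField.card p d hd]

lemma forall_smul_eq_self_iff (l : Option 𝔽) (g : Gp p d) :
    (∀ x : Gp p d ⧸ (Tpart p d l ⊔ Hpart p d), g • x = x) ↔ g ∈ Tpart p d l := by
  have hfix : (∀ x : Gp p d ⧸ (Tpart p d l ⊔ Hpart p d), g • x = x) ↔
      ∀ v : 𝔽, cocycle l g + g.right * v = v := by
    rw [(cosetCoord_bijective l).surjective.forall]
    simp only [← (cosetCoord_bijective l).injective.eq_iff, cosetCoord_smul]
  rw [hfix, mem_Tpart_iff]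
  refine ⟨fun h => ?_, fun ⟨hr, hc⟩ v => by simp [hr, hc]⟩
  have h0 : cocycle l g = 0 := by simpa using h 0
  exact ⟨Units.val_eq_one.1 (by simpa [h0] using h 1), h0⟩

section NormalSubgroup

variable {N : Subgroup (Gp p d)} (hN : N.Normal)
include hN

lemma translation_smul_mem {w : 𝔽 × 𝔽} (hw : translation w ∈ N) (a : 𝔽) :
    translation (a • w) ∈ N := by
  rcases eq_or_ne a 0 with rfl | ha
  · simp
  · simpa [inr_mul_translation_mul_inr_inv] using hN.conj_mem _ hw (.inr (Units.mk0 a ha))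

lemma translation_mem_of_right_ne_one {g : Gp p d} (hg : g ∈ N) (hr : g.right ≠ 1)
    (w : 𝔽 × 𝔽) : translation w ∈ N := by
  have hr' : 1 - (g.right : 𝔽) ≠ 0 := sub_ne_zero.2 fun h => hr (Units.val_eq_one.1 h.symm)
  have hmem := mul_mem (hN.conj_mem g hg (translation ((1 - (g.right : 𝔽))⁻¹ • w))) (inv_mem hg)
  rwa [translation_commutator, smul_smul, mul_inv_cancel₀ hr', one_smul] at hmem

lemma exists_smul_eq_of_translation_mem {l : Option 𝔽} {w : 𝔽 × 𝔽} (hw : translation w ∈ N)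
    (hlw : coord l w ≠ 0) (x y : Gp p d ⧸ (Tpart p d l ⊔ Hpart p d)) : ∃ n ∈ N, n • x = y := by
  refine ⟨_, translation_smul_mem hN hw ((cosetCoord l y - cosetCoord l x) / coord l w), ?_⟩
  apply (cosetCoord_bijective l).injective
  rw [cosetCoord_smul, cocycle_translation, right_translation, Units.val_one, one_mul, map_smul,
    smul_eq_mul, div_mul_cancel₀ _ hlw, sub_add_cancel]

lemma exists_smul_eq_or_exists_smul_eq (hN1 : N ≠ ⊥) {l m : Option 𝔽} (hlm : l ≠ m) :
    (∀ x y : Gp p d ⧸ (Tpart p d l ⊔ Hpart p d), ∃ n ∈ N, n • x = y) ∨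
      (∀ x y : Gp p d ⧸ (Tpart p d m ⊔ Hpart p d), ∃ n ∈ N, n • x = y) := by
  obtain ⟨g, hg, hg1⟩ := (Subgroup.bot_or_exists_ne_one N).resolve_left hN1
  by_cases hr : g.right = 1
  · rw [eq_translation_of_right_eq_one hr] at hg hg1
    set w := Multiplicative.toAdd g.left
    have hw : w ≠ 0 := by rintro hw; simp [hw] at hg1
    by_cases hl : coord l w = 0
    · exact .inr (exists_smul_eq_of_translation_mem hN hg
        fun hm => hw (eq_zero_of_coord_eq_zero hlm hl hm))
    · exact .inl (exists_smul_eq_of_translation_mem hN hg hl)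
  · obtain ⟨w, hw⟩ := coord_surjective l 1
    exact .inl (exists_smul_eq_of_translation_mem hN (translation_mem_of_right_ne_one hN hg hr w)
      (by simp [hw]))

end NormalSubgroup

end GaloisFieldPregeometry

open GaloisFieldPregeometry in
theorem galois_field_pregeometry_general (p d : ℕ) [Fact p.Prime] (hd : 0 < d)
    (Λ : Set (Option (GaloisField p d))) :
    -- each part is a coset space of size p^d, so Γ_Λ ≅ Γ(|Λ|, p^d)
    (∀ l ∈ Λ, Nat.card (Gp p d ⧸ (Tpart p d l ⊔ Hpart p d)) = p ^ d) ∧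
    -- at least two parts, each of size > 1 (non-degeneracy)
    (1 < p ^ d ∧ some (0 : GaloisField p d) ≠ (none : Option (GaloisField p d))) ∧
    -- the kernel of the G-action on the part of type l is exactly T_l
    (∀ l ∈ Λ, ∀ g : Gp p d,
      (∀ x : Gp p d ⧸ (Tpart p d l ⊔ Hpart p d), g • x = x) ↔ g ∈ Tpart p d l) ∧
    -- Γ_Λ is G-normal-basic: every nontrivial normal subgroup of G is
    -- transitive on all but at most one part
    (∀ N : Subgroup (Gp p d), N.Normal → N ≠ ⊥ → ∀ l ∈ Λ, ∀ m ∈ Λ, l ≠ m →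
      (∀ x y : Gp p d ⧸ (Tpart p d l ⊔ Hpart p d), ∃ n ∈ N, n • x = y) ∨
      (∀ x y : Gp p d ⧸ (Tpart p d m ⊔ Hpart p d), ∃ n ∈ N, n • x = y)) :=
  ⟨fun l _ => card_quotient_sup hd.ne' l,
    ⟨Nat.one_lt_pow hd.ne' (Fact.out : p.Prime).one_lt, Option.some_ne_none 0⟩,
    fun l _ => forall_smul_eq_self_iff l,
    fun _ hN hN1 _ _ _ _ hlm => exists_smul_eq_or_exists_smul_eq hN hN1 hlm⟩

/-- Example 5.7: With `G = (T×T) ⋊ H` as above and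
`Λ ⊆ F_{p^d} ∪ {∞}` containing `0` and `∞`, the pregeometry `Γ_Λ` whose
elements of type `λ ∈ Λ` are the cosets of `T_λ·H` in `G` (with `G` acting by
multiplication and any two elements of distinct types incident) satisfies:
every part has size `p^d` (so `Γ_Λ ≅ Γ(|Λ|, p^d)`, the incidence graph being
complete multipartite by construction), the kernel of the `G`-action on the
type-`λ` part is exactly `T_λ`, and `Γ_Λ` is `G`-normal-basic. -/
theorem galois_field_pregeometry (p d : ℕ) [Fact p.Prime] (hd : 0 < d)
    (Λ : Set (Option (GaloisField p d)))
    (h0 : some 0 ∈ Λ) (hinf : none ∈ Λ) :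
    -- each part is a coset space of size p^d, so Γ_Λ ≅ Γ(|Λ|, p^d)
    (∀ l ∈ Λ, Nat.card (Gp p d ⧸ (Tpart p d l ⊔ Hpart p d)) = p ^ d) ∧
    -- at least two parts, each of size > 1 (non-degeneracy)
    (1 < p ^ d ∧ some (0 : GaloisField p d) ≠ (none : Option (GaloisField p d))) ∧
    -- the kernel of the G-action on the part of type l is exactly T_l
    (∀ l ∈ Λ, ∀ g : Gp p d,
      (∀ x : Gp p d ⧸ (Tpart p d l ⊔ Hpart p d), g • x = x) ↔ g ∈ Tpart p d l) ∧
    -- Γ_Λ is G-normal-basic: every nontrivial normal subgroup of G is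
    -- transitive on all but at most one part
    (∀ N : Subgroup (Gp p d), N.Normal → N ≠ ⊥ → ∀ l ∈ Λ, ∀ m ∈ Λ, l ≠ m →
      (∀ x y : Gp p d ⧸ (Tpart p d l ⊔ Hpart p d), ∃ n ∈ N, n • x = y) ∨
      (∀ x y : Gp p d ⧸ (Tpart p d m ⊔ Hpart p d), ∃ n ∈ N, n • x = y)) :=
  galois_field_pregeometry_general p d hd Λ
end
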